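/- For all real numbers u_pt, u_x, u_x2, u_x3, u_x4, u_x5, u_x6, u_x7, u_x8, the degree-8 polynomial P(x) = u_pt + u_x·L₁(x) + u_x2·L₂(x) + u_x3·L₃(x) + u_x4·L₄(x) + u_x5·L₅(x) + u_x6·L₆(x) + u_x7·L₇(x) + u_x8·L₈(x) has smoothness indicator β(P) = (u_x + u_x3/10 + u_x5/126 + u_x7/1716)² + (13/3)·(u_x2 + (123/455)·u_x4 + (85/2002)·u_x6 + (29/5577)·u_x8)² + (781/20)·(u_x3 + (26045/49203)·u_x5 + (8395/60918)·u_x7)² + (1421461/2275)·(u_x4 + (81596225/93816426)·u_x6 + (618438835/1829420307)·u_x8)² + (21520059541/1377684)·(u_x5 + (722379670131/559521548066)·u_x7)² + (15510384942580921/27582029244)·(u_x6 + (5423630339859998294/3024525063803279595)·u_x8)² + (12210527897166191835083/443141066068272)·(u_x7)² + (75509368098103789336083731407561/42818201328263029226415)·(u_x8)². -/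

import Mathlib

/-!
β is a quadratic form in the monomial coefficients `a_k` of `P`: the `l`-th derivative has
coefficients `k!/(k-l)! · a_k`, and `∫_{-1/2}^{1/2} x^m dx` is explicit. After rewriting the
Legendre combination in the monomial basis, the claim is a polynomial identity in the `u`'s;
its right-hand side is the completed-square (LDLᵀ) form of that quadratic form.
-/

open Polynomial

/-- Legendre polynomial `L₁` shifted to `[−1/2, 1/2]`, as a real polynomial. -/
noncomputable def L1 : ℝ[X] := X

/-- Legendre polynomial `L₂` shifted to `[−1/2, 1/2]`, as a real polynomial. -/
noncomputable def L2 : ℝ[X] := X ^ 2 - C (1 / 12)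

/-- Legendre polynomial `L₃` shifted to `[−1/2, 1/2]`, as a real polynomial. -/
noncomputable def L3 : ℝ[X] := X ^ 3 - C (3 / 20) * X

/-- Legendre polynomial `L₄` shifted to `[−1/2, 1/2]`, as a real polynomial. -/
noncomputable def L4 : ℝ[X] := X ^ 4 - C (3 / 14) * X ^ 2 + C (3 / 560)

/-- Legendre polynomial `L₅` shifted to `[−1/2, 1/2]`, as a real polynomial. -/
noncomputable def L5 : ℝ[X] := X ^ 5 - C (5 / 18) * X ^ 3 + C (5 / 336) * X

/-- Legendre polynomial `L₆` shifted to `[−1/2, 1/2]`, as a real polynomial. -/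
noncomputable def L6 : ℝ[X] :=
  X ^ 6 - C (15 / 44) * X ^ 4 + C (5 / 176) * X ^ 2 - C (5 / 14784)

/-- Legendre polynomial `L₇` shifted to `[−1/2, 1/2]`, as a real polynomial. -/
noncomputable def L7 : ℝ[X] :=
  X ^ 7 - C (21 / 52) * X ^ 5 + C (105 / 2288) * X ^ 3 - C (35 / 27456) * X

/-- Legendre polynomial `L₈` shifted to `[−1/2, 1/2]`, as a real polynomial. -/
noncomputable def L8 : ℝ[X] :=
  X ^ 8 - C (7 / 15) * X ^ 6 + C (7 / 104) * X ^ 4 - C (7 / 2288) * X ^ 2 + C (7 / 329472)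

/-- The Jiang–Shu smoothness indicator of a real polynomial on the unit zone `[−1/2, 1/2]`:
`β(P) = Σ_{l=1}^{deg P} ∫_{−1/2}^{1/2} (P⁽ˡ⁾(x))² dx`. -/
noncomputable def beta (P : ℝ[X]) : ℝ :=
  ∑ l ∈ Finset.Icc 1 P.natDegree,
    ∫ x in (-(1 : ℝ) / 2)..(1 / 2), ((derivative^[l] P).eval x) ^ 2

namespace Polynomial

theorem integral_eval_sq_eq_sum (Q : ℝ[X]) {n : ℕ} (hQ : Q.natDegree < n) (a b : ℝ) :
    ∫ x in a..b, Q.eval x ^ 2 =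
      ∑ i ∈ Finset.range n, ∑ j ∈ Finset.range n,
        Q.coeff i * Q.coeff j * ((b ^ (i + j + 1) - a ^ (i + j + 1)) / (i + j + 1)) := by
  have hsq : ∀ x : ℝ, Q.eval x ^ 2 =
      ∑ i ∈ Finset.range n, ∑ j ∈ Finset.range n, Q.coeff i * Q.coeff j * x ^ (i + j) := by
    intro x
    rw [sq, eval_eq_sum_range' hQ, Finset.sum_mul_sum]
    simp only [pow_add]
    exact Finset.sum_congr rfl fun i _ => Finset.sum_congr rfl fun j _ => by ring
  simp_rw [hsq]
  rw [intervalIntegral.integral_finsetSum fun i _ =>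
    (by fun_prop : Continuous _).intervalIntegrable _ _]
  refine Finset.sum_congr rfl fun i _ => ?_
  rw [intervalIntegral.integral_finsetSum fun j _ =>
    (by fun_prop : Continuous _).intervalIntegrable _ _]
  refine Finset.sum_congr rfl fun j _ => ?_
  rw [intervalIntegral.integral_const_mul, integral_pow]
  push_cast
  ring

end Polynomial

theorem beta_eq_sum_Icc_of_natDegree_le {P : ℝ[X]} {n : ℕ} (hP : P.natDegree ≤ n) :
    beta P = ∑ l ∈ Finset.Icc 1 n,
      ∫ x in (-(1 : ℝ) / 2)..(1 / 2), ((derivative^[l] P).eval x) ^ 2 := by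
  refine Finset.sum_subset (Finset.Icc_subset_Icc_right hP) fun l hl hl' => ?_
  simp only [Finset.mem_Icc] at hl hl'
  simp [iterate_derivative_eq_zero (show P.natDegree < l by omega)]

theorem beta_eq_sum_coeff {P : ℝ[X]} {n : ℕ} (hP : P.natDegree ≤ n) :
    beta P = ∑ l ∈ Finset.Icc 1 n,
      ∑ i ∈ Finset.range (n + 1 - l), ∑ j ∈ Finset.range (n + 1 - l),
      ((i + l).descFactorial l * P.coeff (i + l)) * ((j + l).descFactorial l * P.coeff (j + l))
        * (((1 : ℝ) / 2) ^ (i + j + 1) - (-(1 : ℝ) / 2) ^ (i + j + 1)) / (i + j + 1) := by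
  rw [beta_eq_sum_Icc_of_natDegree_le hP]
  refine Finset.sum_congr rfl fun l hl => ?_
  have hdeg : (derivative^[l] P).natDegree < n + 1 - l := by
    have := P.natDegree_iterate_derivative l
    simp only [Finset.mem_Icc] at hl
    omega
  rw [integral_eval_sq_eq_sum _ hdeg]
  simp only [coeff_iterate_derivative, nsmul_eq_mul, mul_div_assoc]

theorem legendre_combination_eq_monomials (upt ux ux2 ux3 ux4 ux5 ux6 ux7 ux8 : ℝ) :
    C upt + C ux * L1 + C ux2 * L2 + C ux3 * L3 + C ux4 * L4
        + C ux5 * L5 + C ux6 * L6 + C ux7 * L7 + C ux8 * L8 =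
      C (upt - 1 / 12 * ux2 + 3 / 560 * ux4 - 5 / 14784 * ux6 + 7 / 329472 * ux8)
        + C (ux - 3 / 20 * ux3 + 5 / 336 * ux5 - 35 / 27456 * ux7) * X
        + C (ux2 - 3 / 14 * ux4 + 5 / 176 * ux6 - 7 / 2288 * ux8) * X ^ 2
        + C (ux3 - 5 / 18 * ux5 + 105 / 2288 * ux7) * X ^ 3
        + C (ux4 - 15 / 44 * ux6 + 7 / 104 * ux8) * X ^ 4
        + C (ux5 - 21 / 52 * ux7) * X ^ 5
        + C (ux6 - 7 / 15 * ux8) * X ^ 6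
        + C ux7 * X ^ 7 + C ux8 * X ^ 8 := by
  simp only [L1, L2, L3, L4, L5, L6, L7, L8, map_add, map_sub, map_mul]
  ring

/-- The Jiang–Shu smoothness indicator of any degree-8 polynomial written in the shifted
Legendre basis is a sum of perfect squares. -/
theorem smoothness_indicator_r9 (upt ux ux2 ux3 ux4 ux5 ux6 ux7 ux8 : ℝ) :
    beta (C upt + C ux * L1 + C ux2 * L2 + C ux3 * L3 + C ux4 * L4
        + C ux5 * L5 + C ux6 * L6 + C ux7 * L7 + C ux8 * L8) =
      (ux + ux3 / 10 + ux5 / 126 + ux7 / 1716) ^ 2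
        + (13 / 3) * (ux2 + (123 / 455) * ux4 + (85 / 2002) * ux6 + (29 / 5577) * ux8) ^ 2
        + (781 / 20) * (ux3 + (26045 / 49203) * ux5 + (8395 / 60918) * ux7) ^ 2
        + (1421461 / 2275)
          * (ux4 + (81596225 / 93816426) * ux6 + (618438835 / 1829420307) * ux8) ^ 2
        + (21520059541 / 1377684) * (ux5 + (722379670131 / 559521548066) * ux7) ^ 2
        + (15510384942580921 / 27582029244)
          * (ux6 + (5423630339859998294 / 3024525063803279595) * ux8) ^ 2
        + (12210527897166191835083 / 443141066068272) * ux7 ^ 2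
        + (75509368098103789336083731407561 / 42818201328263029226415) * ux8 ^ 2 := by
  rw [legendre_combination_eq_monomials, beta_eq_sum_coeff (n := 8) (by compute_degree!),
    ← Finset.Ico_add_one_right_eq_Icc, Finset.sum_Ico_eq_sum_range]
  simp only [Nat.reduceAdd, Nat.reduceSub, Finset.sum_range_succ, Finset.sum_range_zero,
    coeff_add, coeff_C_mul, coeff_X_pow, coeff_C, coeff_X]
  norm_num [Nat.descFactorial]
  ring
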